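/- Let X be a Banach space, T = {T(t,s) : t, s > a₀} an invertible evolution family on X, h : (a₀,∞) → (0,∞) a growth rate, and a₀* > a₀. Then T is h-expansive on [a₀*,∞) if and only if the rescaled family T^h, given by T_h(t,s) := T(h⁻¹(eᵗ), h⁻¹(eˢ)), is exponentially expansive (i.e., h-expansive with h(t) = eᵗ) on [ln h(a₀*), ∞). -/
import Mathlib


open Set Real

noncomputable section

variable {X : Type*} [NormedAddCommGroup X] [NormedSpace ℝ X] [CompleteSpace X]

/-- An invertible evolution family on `X` with parameter `a₀ ∈ ℝ ∪ {-∞}` (modelled as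
`EReal`), viewed as a two-parameter family `T t s` for all `t, s > a₀` (for `t < s`,
`T t s` is the inverse of `T s t`): `T t t = Id` for `t > a₀`; the two-sided cocycle
identity `T t s ∘ T s r = T t r` holds for all `t, s, r > a₀`; and for every `s > a₀`
and `v ∈ X`, the map `t ↦ T t s v` is continuous on `[s, ∞)`. -/
def IsInvertibleEvolutionFamily (a₀ : EReal) (T : ℝ → ℝ → X →L[ℝ] X) : Prop :=
  (∀ t : ℝ, a₀ < (t : EReal) → T t t = ContinuousLinearMap.id ℝ X) ∧
  (∀ t s r : ℝ, a₀ < (t : EReal) → a₀ < (s : EReal) → a₀ < (r : EReal) →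
    (T t s).comp (T s r) = T t r) ∧
  (∀ s : ℝ, a₀ < (s : EReal) → ∀ v : X, ContinuousOn (fun t => T t s v) (Set.Ici s))

/-- A growth rate: a bijective increasing map from `(a₀, ∞)` onto `(0, ∞)`. -/
def IsGrowthRate (a₀ : EReal) (h : ℝ → ℝ) : Prop :=
  StrictMonoOn h {t : ℝ | a₀ < (t : EReal)} ∧
  Set.BijOn h {t : ℝ | a₀ < (t : EReal)} (Set.Ioi (0 : ℝ))

/-- An invertible evolution family `T` is `h`-expansive on `J`: there are `L, β > 0` with
`‖v‖ ≤ L ((h t / h a)^(-β) ‖T a t v‖ + (h b / h t)^(-β) ‖T b t v‖)` for every `v ∈ X`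
and all `a ≤ t ≤ b` with `[a, b] ⊆ J`. -/
def HExpansiveOn (h : ℝ → ℝ) (T : ℝ → ℝ → X →L[ℝ] X) (J : Set ℝ) : Prop :=
  ∃ L : ℝ, 0 < L ∧ ∃ β : ℝ, 0 < β ∧
    ∀ (v : X) (a t b : ℝ), a ≤ t → t ≤ b → Set.Icc a b ⊆ J →
      ‖v‖ ≤ L * ((h t / h a) ^ (-β) * ‖T a t v‖ + (h b / h t) ^ (-β) * ‖T b t v‖)

/-- An invertible evolution family `T` is `h`-expansive on `[a₀*, ∞)` iff
the rescaled family `T_h` is exponentially expansive (`h`-expansive with `h = exp`) on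
`[ln h(a₀*), ∞)`. -/
theorem hExpansive_iff_rescaled_expExpansive
    (a₀ : EReal) (T : ℝ → ℝ → X →L[ℝ] X) (h hinv : ℝ → ℝ) (astar : ℝ)
    (hT : IsInvertibleEvolutionFamily a₀ T)
    (hh : IsGrowthRate a₀ h)
    (hinv_spec : Set.InvOn hinv h {t : ℝ | a₀ < (t : EReal)} (Set.Ioi (0 : ℝ)))
    (hinv_maps : Set.MapsTo hinv (Set.Ioi (0 : ℝ)) {t : ℝ | a₀ < (t : EReal)})
    (hastar : a₀ < (astar : EReal)) :
    HExpansiveOn h T (Set.Ici astar) ↔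
      HExpansiveOn Real.exp (fun t s => T (hinv (Real.exp t)) (hinv (Real.exp s)))
        (Set.Ici (Real.log (h astar))) := by
  obtain ⟨hmono, hbij⟩ := hh
  have hposastar : 0 < h astar := hbij.mapsTo hastar
  constructor
  · rintro ⟨L, hL, β, hβ, H⟩
    refine ⟨L, hL, β, hβ, fun v a t b hat htb hsub => ?_⟩
    have ha : Real.log (h astar) ≤ a := hsub ⟨le_rfl, hat.trans htb⟩
    have ht : Real.log (h astar) ≤ t := hsub ⟨hat, htb⟩
    have hb : Real.log (h astar) ≤ b := hsub ⟨hat.trans htb, le_rfl⟩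
    have key : ∀ x : ℝ, Real.log (h astar) ≤ x →
        astar ≤ hinv (Real.exp x) ∧ h (hinv (Real.exp x)) = Real.exp x ∧
        hinv (Real.exp x) ∈ {t : ℝ | a₀ < (t : EReal)} := by
      intro x hx
      have hex : Real.exp x ∈ Set.Ioi (0:ℝ) := Real.exp_pos x
      have heq : h (hinv (Real.exp x)) = Real.exp x := hinv_spec.2 hex
      have hmem : hinv (Real.exp x) ∈ {t : ℝ | a₀ < (t : EReal)} := hinv_maps hex
      have hge : h astar ≤ Real.exp x := by
        calc h astar = Real.exp (Real.log (h astar)) := (Real.exp_log hposastar).symm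
        _ ≤ Real.exp x := Real.exp_le_exp.mpr hx
      refine ⟨?_, heq, hmem⟩
      by_contra hc
      push_neg at hc
      have := hmono hmem hastar hc
      rw [heq] at this
      exact absurd hge (not_le.mpr this)
    obtain ⟨haa, hea, hma⟩ := key a ha
    obtain ⟨hta, het, hmt⟩ := key t ht
    obtain ⟨hba, heb, hmb⟩ := key b hb
    have h1 : hinv (Real.exp a) ≤ hinv (Real.exp t) := by
      rw [← hmono.le_iff_le hma hmt, hea, het]
      exact Real.exp_le_exp.mpr hat
    have h2 : hinv (Real.exp t) ≤ hinv (Real.exp b) := by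
      rw [← hmono.le_iff_le hmt hmb, het, heb]
      exact Real.exp_le_exp.mpr htb
    have hsub' : Set.Icc (hinv (Real.exp a)) (hinv (Real.exp b)) ⊆ Set.Ici astar :=
      fun x hx => le_trans haa hx.1
    have := H v _ _ _ h1 h2 hsub'
    rwa [hea, het, heb] at this
  · rintro ⟨L, hL, β, hβ, H⟩
    refine ⟨L, hL, β, hβ, fun v a t b hat htb hsub => ?_⟩
    have ha : astar ≤ a := hsub ⟨le_rfl, hat.trans htb⟩
    have ht : astar ≤ t := hsub ⟨hat, htb⟩
    have hb : astar ≤ b := hsub ⟨hat.trans htb, le_rfl⟩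
    have key : ∀ x : ℝ, astar ≤ x →
        x ∈ {t : ℝ | a₀ < (t : EReal)} ∧ 0 < h x ∧
        Real.log (h astar) ≤ Real.log (h x) ∧ hinv (h x) = x := by
      intro x hx
      have hmem : x ∈ {t : ℝ | a₀ < (t : EReal)} :=
        lt_of_lt_of_le hastar (EReal.coe_le_coe_iff.mpr hx)
      have hpos : 0 < h x := hbij.mapsTo hmem
      have hle : h astar ≤ h x := (hmono.le_iff_le hastar hmem).mpr hx
      exact ⟨hmem, hpos, Real.log_le_log hposastar hle, hinv_spec.1 hmem⟩
    obtain ⟨hma, hpa, hla, hia⟩ := key a ha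
    obtain ⟨hmt, hpt, hlt, hit⟩ := key t ht
    obtain ⟨hmb, hpb, hlb, hib⟩ := key b hb
    have h1 : Real.log (h a) ≤ Real.log (h t) :=
      Real.log_le_log hpa ((hmono.le_iff_le hma hmt).mpr hat)
    have h2 : Real.log (h t) ≤ Real.log (h b) :=
      Real.log_le_log hpt ((hmono.le_iff_le hmt hmb).mpr htb)
    have hsub' : Set.Icc (Real.log (h a)) (Real.log (h b)) ⊆
        Set.Ici (Real.log (h astar)) := fun x hx => le_trans hla hx.1
    have := H v _ _ _ h1 h2 hsub'
    simp only [Real.exp_log hpa, Real.exp_log hpt, Real.exp_log hpb, hia, hit, hib] at this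
    exact this
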